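/- Let G̃ be the pattern matching graph for text T of length n and pattern P of length w: vertices {0,…,n} × {0,…,w}, horizontal edges (i−1,j)→(i,j) of cost 1 except cost 0 when j = 0, vertical edges (i,j−1)→(i,j) of cost 1, and diagonal edges (i−1,j−1)→(i,j) of cost [T_i ≠ P_j]. Then for every t ∈ {1,…,n}, the minimum cost of a path from (0,0) to (t,w) equals min_{1 ≤ i ≤ t+1} edit(T[i..t], P). -/

import Mathlib

/-!
Write `E(a, b) = edit(T[a+1..t], P[b+1..w])`. Away from the bottom row every edge of the graph
costs exactly the corresponding edit operation (deletion, insertion, substitution), so the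
recurrence of the edit distance shows, by induction along a path, that any path from `(a, b)`
with `b ≥ 1` to `(t, w)` costs at least `E(a, b)`; following a minimising branch of the same
recurrence builds a path of cost at most `E(a, b)`. On the bottom row horizontal edges are free,
so a path from `(0, 0)` may leave that row at any column `i ≤ t` at no cost, which gives the
minimum of `E(i, 0)` over the starting position `i` of the substring of `T`.
-/

variable {α : Type*}

/-- Unit-cost Levenshtein distance (replacement for the removed Mathlib
`levenshtein Levenshtein.defaultCost`, via its characterising recursion). -/
def unitLevenshtein [DecidableEq α] : List α → List α → ℕ
  | [], ys => ys.length
  | x :: xs, [] => (x :: xs).length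
  | x :: xs, y :: ys =>
      min (1 + unitLevenshtein xs (y :: ys))
        (min (1 + unitLevenshtein (x :: xs) ys)
          ((if x = y then 0 else 1) + unitLevenshtein xs ys))

/-- Levenshtein edit distance with unit costs. -/
def edit [DecidableEq α] (u v : List α) : ℕ :=
  unitLevenshtein u v

/-- `GridPath hcost dcost p q c` : there is a path from `p` to `q` in the grid
graph of total cost `c`, where the horizontal edge (i,j) → (i+1,j) costs
`hcost (i,j)`, each vertical edge (i,j) → (i,j+1) costs 1, and the diagonal
edge (i,j) → (i+1,j+1) costs `dcost (i,j)`. -/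
inductive GridPath (hcost dcost : ℕ × ℕ → ℕ) : ℕ × ℕ → ℕ × ℕ → ℕ → Prop
  | nil (p : ℕ × ℕ) : GridPath hcost dcost p p 0
  | horiz {q : ℕ × ℕ} {c : ℕ} (i j : ℕ) :
      GridPath hcost dcost (i + 1, j) q c → GridPath hcost dcost (i, j) q (hcost (i, j) + c)
  | vert {q : ℕ × ℕ} {c : ℕ} (i j : ℕ) :
      GridPath hcost dcost (i, j + 1) q c → GridPath hcost dcost (i, j) q (1 + c)
  | diag {q : ℕ × ℕ} {c : ℕ} (i j : ℕ) :
      GridPath hcost dcost (i + 1, j + 1) q c → GridPath hcost dcost (i, j) q (dcost (i, j) + c)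

section EditDistance

variable [DecidableEq α]

@[simp]
lemma edit_nil_left (ys : List α) : edit [] ys = ys.length := by
  cases ys <;> simp [edit, unitLevenshtein]

@[simp]
lemma edit_nil_right (xs : List α) : edit xs [] = xs.length := by
  cases xs <;> simp [edit, unitLevenshtein]

lemma edit_cons_cons (x y : α) (xs ys : List α) :
    edit (x :: xs) (y :: ys) =
      min (1 + edit xs (y :: ys))
        (min (1 + edit (x :: xs) ys) ((if x = y then 0 else 1) + edit xs ys)) := by
  rw [edit, unitLevenshtein]
  rfl

lemma edit_le_one_add_edit_tail_left (xs ys : List α) : edit xs ys ≤ 1 + edit xs.tail ys := by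
  rcases xs with _ | ⟨x, xs⟩
  · simp
  · rcases ys with _ | ⟨y, ys⟩
    · simp
    · rw [edit_cons_cons, List.tail_cons]
      omega

lemma edit_le_one_add_edit_tail_right (xs ys : List α) : edit xs ys ≤ 1 + edit xs ys.tail := by
  rcases ys with _ | ⟨y, ys⟩
  · simp
  · rcases xs with _ | ⟨x, xs⟩
    · simp
    · rw [edit_cons_cons, List.tail_cons]
      omega

end EditDistance

lemma List.drop_eq_getI_cons [Inhabited α] {l : List α} {n : ℕ} (h : n < l.length) :
    l.drop n = l.getI n :: l.drop (n + 1) := by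
  rw [List.drop_eq_getElem_cons h, List.getI_eq_getElem _ h]

lemma List.getI_take [Inhabited α] (l : List α) {n m : ℕ} (h : n < m) :
    (l.take m).getI n = l.getI n := by
  simp [List.getI_eq_getElem?_getD, h]

namespace GridPath

variable {hcost dcost : ℕ × ℕ → ℕ} {p q : ℕ × ℕ} {c : ℕ}

lemma le (hpath : GridPath hcost dcost p q c) : p ≤ q := by
  induction hpath with
  | nil => rfl
  | horiz i j _ ih | vert i j _ ih | diag i j _ ih =>
    rw [Prod.mk_le_mk] at ih ⊢
    omega

lemma of_free_bottom_row (hfree : ∀ i, hcost (i, 0) = 0) {a : ℕ}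
    (hpath : GridPath hcost dcost (a, 0) q c) : GridPath hcost dcost (0, 0) q c := by
  induction a with
  | zero => exact hpath
  | succ a ih => exact ih (by simpa [hfree] using hpath.horiz a 0)

end GridPath

section PatternGraph

variable [DecidableEq α] (T P : List α) (t : ℕ)

/-- `suffixEdit T P t a b` is `edit(T[a+1..t], P[b+1..w])` in the 1-based notation of the
statement. -/
def suffixEdit (a b : ℕ) : ℕ := edit ((T.take t).drop a) (P.drop b)

lemma suffixEdit_le_succ_left (a b : ℕ) :
    suffixEdit T P t a b ≤ 1 + suffixEdit T P t (a + 1) b := by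
  rw [suffixEdit, suffixEdit, ← List.tail_drop]
  exact edit_le_one_add_edit_tail_left _ _

lemma suffixEdit_le_succ_right (a b : ℕ) :
    suffixEdit T P t a b ≤ 1 + suffixEdit T P t a (b + 1) := by
  rw [suffixEdit, suffixEdit, ← List.tail_drop (l := P)]
  exact edit_le_one_add_edit_tail_right _ _

variable {t}

lemma suffixEdit_of_le_left {a : ℕ} (ha : t ≤ a) (b : ℕ) :
    suffixEdit T P t a b = P.length - b := by
  rw [suffixEdit, List.drop_eq_nil_of_le (by simp only [List.length_take]; omega), edit_nil_left,
    List.length_drop]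

lemma suffixEdit_length_right (ht : t ≤ T.length) (a : ℕ) :
    suffixEdit T P t a P.length = t - a := by
  simp only [suffixEdit, List.drop_length, edit_nil_right, List.length_drop, List.length_take]
  omega

variable [Inhabited α]

def matchCost : ℕ × ℕ → ℕ := fun p => if T.getI p.1 = P.getI p.2 then 0 else 1

lemma suffixEdit_eq_min {a b : ℕ} (ht : t ≤ T.length) (ha : a < t) (hb : b < P.length) :
    suffixEdit T P t a b =
      min (1 + suffixEdit T P t (a + 1) b)
        (min (1 + suffixEdit T P t a (b + 1))
          (matchCost T P (a, b) + suffixEdit T P t (a + 1) (b + 1))) := by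
  have hT : (T.take t).drop a = T.getI a :: (T.take t).drop (a + 1) := by
    rw [List.drop_eq_getI_cons (by simp only [List.length_take]; omega), List.getI_take _ ha]
  simp only [suffixEdit]
  rw [hT, List.drop_eq_getI_cons hb, edit_cons_cons]
  rfl

variable {hcost : ℕ × ℕ → ℕ}

theorem suffixEdit_le_of_gridPath (hcost_pos : ∀ i j, j ≠ 0 → 1 ≤ hcost (i, j))
    (ht : t ≤ T.length) {p : ℕ × ℕ} {c : ℕ}
    (hpath : GridPath hcost (matchCost T P) p (t, P.length) c) (hp : p.2 ≠ 0) :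
    suffixEdit T P t p.1 p.2 ≤ c := by
  generalize hq : (t, P.length) = q at hpath
  induction hpath with
  | nil => subst hq; simp [suffixEdit_of_le_left]
  | horiz i j _ ih =>
    have hrest := ih hp hq
    dsimp only at hp hrest ⊢
    have := hcost_pos i j hp
    have := suffixEdit_le_succ_left T P t i j
    omega
  | vert i j _ ih =>
    have hrest := ih (by simp) hq
    dsimp only at hrest ⊢
    have := suffixEdit_le_succ_right T P t i j
    omega
  | diag i j hpath ih =>
    subst hq
    have hrest := ih (by simp) rfl
    have hle := Prod.mk_le_mk.mp hpath.le
    dsimp only at hp hrest hle ⊢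
    have := suffixEdit_eq_min T P ht (a := i) (b := j) (by omega) (by omega)
    omega

theorem exists_suffixEdit_le_of_gridPath (hcost_pos : ∀ i j, j ≠ 0 → 1 ≤ hcost (i, j))
    (ht : t ≤ T.length) {p : ℕ × ℕ} {c : ℕ}
    (hpath : GridPath hcost (matchCost T P) p (t, P.length) c) (hp : p.2 = 0) :
    ∃ i, p.1 ≤ i ∧ i ≤ t ∧ suffixEdit T P t i 0 ≤ c := by
  generalize hq : (t, P.length) = q at hpath
  induction hpath with
  | nil =>
    subst hq
    exact ⟨t, le_rfl, le_rfl, by simp_all [suffixEdit_of_le_left]⟩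
  | horiz i j _ ih =>
    obtain ⟨k, hik, hkt, hk⟩ := ih hp hq
    exact ⟨k, by dsimp only at hik ⊢; omega, hkt, by omega⟩
  | vert i j hpath _ =>
    subst hq
    dsimp only at hp
    subst hp
    have hrest := suffixEdit_le_of_gridPath T P hcost_pos ht hpath (by simp)
    have hle := Prod.mk_le_mk.mp hpath.le
    dsimp only at hrest hle ⊢
    have := suffixEdit_le_succ_right T P t i 0
    exact ⟨i, le_rfl, hle.1, by omega⟩
  | diag i j hpath _ =>
    subst hq
    dsimp only at hp
    subst hp
    have hrest := suffixEdit_le_of_gridPath T P hcost_pos ht hpath (by simp)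
    have hle := Prod.mk_le_mk.mp hpath.le
    dsimp only at hrest hle ⊢
    have := suffixEdit_eq_min T P ht (a := i) (b := 0) (by omega) (by omega)
    exact ⟨i, le_rfl, by omega, by omega⟩

theorem exists_gridPath_le_suffixEdit (hcost_le : ∀ p, hcost p ≤ 1) (ht : t ≤ T.length)
    (a b : ℕ) (ha : a ≤ t) (hb : b ≤ P.length) :
    ∃ c ≤ suffixEdit T P t a b, GridPath hcost (matchCost T P) (a, b) (t, P.length) c := by
  have := hcost_le (a, b)
  rcases ha.lt_or_eq with ha | hat
  · obtain ⟨c₁, hc₁, path₁⟩ := exists_gridPath_le_suffixEdit hcost_le ht (a + 1) b ha hb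
    rcases hb.lt_or_eq with hb | rfl
    · obtain ⟨c₂, hc₂, path₂⟩ :=
        exists_gridPath_le_suffixEdit hcost_le ht a (b + 1) ha.le hb
      obtain ⟨c₃, hc₃, path₃⟩ :=
        exists_gridPath_le_suffixEdit hcost_le ht (a + 1) (b + 1) ha hb
      have hmin := suffixEdit_eq_min T P ht ha hb
      by_cases hdel : suffixEdit T P t a b = 1 + suffixEdit T P t (a + 1) b
      · exact ⟨_, by omega, path₁.horiz a b⟩
      by_cases hins : suffixEdit T P t a b = 1 + suffixEdit T P t a (b + 1)
      · exact ⟨_, by omega, path₂.vert a b⟩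
      · exact ⟨_, by omega, path₃.diag a b⟩
    · have := suffixEdit_length_right T P ht a
      have := suffixEdit_length_right T P ht (a + 1)
      exact ⟨_, by omega, path₁.horiz a P.length⟩
  · rcases hb.lt_or_eq with hb | rfl
    · obtain ⟨c₂, hc₂, path₂⟩ :=
        exists_gridPath_le_suffixEdit hcost_le ht a (b + 1) ha hb
      have := suffixEdit_of_le_left T P hat.ge b
      have := suffixEdit_of_le_left T P hat.ge (b + 1)
      exact ⟨_, by omega, path₂.vert a b⟩
    · exact ⟨0, Nat.zero_le _, hat ▸ .nil _⟩
termination_by t - a + (P.length - b)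

end PatternGraph

theorem stmt_12_general [DecidableEq α] [Inhabited α] (T P : List α) (n w : ℕ)
    (hT : T.length = n) (hP : P.length = w) (t : ℕ) (ht2 : t ≤ n) :
    IsLeast
      {c : ℕ | GridPath (fun p => if p.2 = 0 then 0 else 1)
        (fun p => if T.getI p.1 = P.getI p.2 then 0 else 1)
        (0, 0) (t, w) c}
      (sInf {d : ℕ | ∃ i, 1 ≤ i ∧ i ≤ t + 1 ∧ d = edit ((T.take t).drop (i - 1)) P}) := by
  subst hT hP
  set H : ℕ × ℕ → ℕ := fun p => if p.2 = 0 then 0 else 1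
  have hH_pos (i j : ℕ) (hj : j ≠ 0) : 1 ≤ H (i, j) := by simp [H, hj]
  have hH_le (p : ℕ × ℕ) : H p ≤ 1 := by simp only [H]; split_ifs <;> omega
  set S := {d : ℕ | ∃ i, 1 ≤ i ∧ i ≤ t + 1 ∧ d = edit ((T.take t).drop (i - 1)) P}
  have suffixEdit_mem (i : ℕ) (hi : i ≤ t) : suffixEdit T P t i 0 ∈ S :=
    ⟨i + 1, by omega, by omega, rfl⟩
  have lower (c : ℕ) (hc : GridPath H (matchCost T P) (0, 0) (t, P.length) c) : sInf S ≤ c := by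
    obtain ⟨i, -, hi, hic⟩ := exists_suffixEdit_le_of_gridPath T P hH_pos ht2 hc rfl
    exact (Nat.sInf_le (suffixEdit_mem i hi)).trans hic
  obtain ⟨i, -, hi, hsInf⟩ := Nat.sInf_mem ⟨_, suffixEdit_mem 0 (Nat.zero_le t)⟩
  obtain ⟨c, hc, hpath⟩ :=
    exists_gridPath_le_suffixEdit T P hH_le ht2 (i - 1) 0 (by omega) (Nat.zero_le _)
  have horigin := hpath.of_free_bottom_row (fun _ => rfl)
  obtain rfl : c = sInf S := le_antisymm (hc.trans hsInf.ge) (lower c horigin)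
  exact ⟨horigin, lower⟩

/-- In the pattern matching graph (horizontal edges on the bottom row j = 0
are free), the minimum cost of a path from (0,0) to (t,w) equals
min_{1 ≤ i ≤ t+1} edit(T[i..t], P). -/
theorem stmt_12 [DecidableEq α] [Inhabited α] (T P : List α) (n w : ℕ)
    (hT : T.length = n) (hP : P.length = w) (t : ℕ) (ht1 : 1 ≤ t) (ht2 : t ≤ n) :
    IsLeast
      {c : ℕ | GridPath (fun p => if p.2 = 0 then 0 else 1)
        (fun p => if T.getI p.1 = P.getI p.2 then 0 else 1)
        (0, 0) (t, w) c}
      (sInf {d : ℕ | ∃ i, 1 ≤ i ∧ i ≤ t + 1 ∧ d = edit ((T.take t).drop (i - 1)) P}) :=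
  stmt_12_general T P n w hT hP t ht2
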